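/- arXiv:2105.04504 — 7 statements merged into one kernel-verified Lean document; each statement's English description precedes it below -/
import Mathlib

section
/- For every natural number p, the double integral ∫_0^π ( ∫_0^{x'} cos(2x)^p dx ) dx' equals ((p−1)!! / p!!) · π²/2 if p is even, and equals 0 if p is odd. -/
open Real Nat MeasureTheory intervalIntegral

/-! The integrand `f x = cos (2x) ^ p` satisfies `f (π - x) = f x`, so the primitive
`I x' = ∫_0^{x'} f` satisfies `I (π - x') = I π - I x'`; averaging `I` with its reflection
gives `∫_0^π I = (π / 2) I(π)`. Substituting `u = 2x`, `I(π)` is half of `∫_0^{2π} cos^p`,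
which the reduction formula `J(p + 2) = (p + 1) / (p + 2) J(p)` evaluates by two-step
induction. -/

theorem integral_zero_sub_eq_sub_of_symm {f : ℝ → ℝ} {a : ℝ}
    (hf : ∀ b c, IntervalIntegrable f volume b c) (hsymm : ∀ x, f (a - x) = f x) (x' : ℝ) :
    ∫ x in (0:ℝ)..a - x', f x = (∫ x in (0:ℝ)..a, f x) - ∫ x in (0:ℝ)..x', f x := by
  have hreflect : ∫ x in (0:ℝ)..a - x', f x = ∫ x in x'..a, f x := by
    calc ∫ x in (0:ℝ)..a - x', f x = ∫ x in (0:ℝ)..a - x', f (a - x) :=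
          integral_congr fun x _ => (hsymm x).symm
      _ = ∫ x in x'..a, f x := by simp [integral_comp_sub_left f a]
  rw [hreflect, ← integral_add_adjacent_intervals (hf 0 x') (hf x' a)]
  ring

theorem integral_integral_eq_half_mul_of_symm {f : ℝ → ℝ} {a : ℝ}
    (hf : ∀ b c, IntervalIntegrable f volume b c) (hsymm : ∀ x, f (a - x) = f x) :
    ∫ x' in (0:ℝ)..a, ∫ x in (0:ℝ)..x', f x = a / 2 * ∫ x in (0:ℝ)..a, f x := by
  set I : ℝ → ℝ := fun x' => ∫ x in (0:ℝ)..x', f x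
  have hI : IntervalIntegrable I volume 0 a :=
    (continuous_primitive hf 0).intervalIntegrable 0 a
  have hreflect : ∫ x' in (0:ℝ)..a, I (a - x') = a * I a - ∫ x' in (0:ℝ)..a, I x' := by
    calc ∫ x' in (0:ℝ)..a, I (a - x') = ∫ x' in (0:ℝ)..a, (I a - I x') :=
          integral_congr fun x' _ => integral_zero_sub_eq_sub_of_symm hf hsymm x'
      _ = a * I a - ∫ x' in (0:ℝ)..a, I x' := by
          rw [integral_sub intervalIntegrable_const hI]
          simp
  have hinvariant : ∫ x' in (0:ℝ)..a, I (a - x') = ∫ x' in (0:ℝ)..a, I x' := by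
    simp [integral_comp_sub_left I a]
  linarith

theorem integral_cos_pow_add_two_zero_two_pi (n : ℕ) :
    ∫ x in (0:ℝ)..2 * π, cos x ^ (n + 2) = (n + 1) / (n + 2) * ∫ x in (0:ℝ)..2 * π, cos x ^ n := by
  simp [integral_cos_pow]

theorem doubleFactorial_ratio_add_two (n : ℕ) :
    ((n + 1)‼ : ℝ) / (n + 2)‼ = (n + 1) / (n + 2) * ((n - 1)‼ / n‼) := by
  rw [doubleFactorial_add_one, doubleFactorial_add_two]
  push_cast
  exact mul_div_mul_comm _ _ _ _

theorem integral_cos_pow_zero_two_pi (p : ℕ) :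
    ∫ x in (0:ℝ)..2 * π, cos x ^ p = if Even p then 2 * π * ((p - 1)‼ / p‼ : ℝ) else 0 := by
  induction p using Nat.twoStepInduction with
  | zero => simp
  | one => simp
  | more n ih _ =>
    rw [integral_cos_pow_add_two_zero_two_pi, ih, show n + 2 - 1 = n + 1 by omega,
      doubleFactorial_ratio_add_two]
    simp only [Nat.even_add, even_two, iff_true]
    split_ifs <;> ring

theorem integral_cos_two_mul_pow_zero_pi (p : ℕ) :
    ∫ x in (0:ℝ)..π, cos (2 * x) ^ p = if Even p then π * ((p - 1)‼ / p‼ : ℝ) else 0 := by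
  rw [integral_comp_mul_left (fun u => cos u ^ p) two_ne_zero, mul_zero,
    integral_cos_pow_zero_two_pi, smul_eq_mul]
  split_ifs <;> ring

/-- `∫_0^π ∫_0^{x'} cos(2x)^p dx dx'` equals `((p−1)!!/p!!) · π²/2` for even `p`
and `0` for odd `p`. (For `p = 0`, `(p−1)!! = 0!! = 1` by the natural-subtraction
convention, so the value is `π²/2`.) -/
theorem integral_integral_cos_two_mul_pow (p : ℕ) :
    ∫ x' in (0:ℝ)..π, ∫ x in (0:ℝ)..x', Real.cos (2 * x) ^ p =
      if Even p then
        ((Nat.doubleFactorial (p - 1) : ℝ) / (Nat.doubleFactorial p : ℝ)) * (π ^ 2 / 2)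
      else 0 := by
  have hcont : Continuous fun x : ℝ => cos (2 * x) ^ p := by fun_prop
  have hsymm : ∀ x, cos (2 * (π - x)) ^ p = cos (2 * x) ^ p := fun x => by
    rw [mul_sub, cos_two_pi_sub]
  rw [integral_integral_eq_half_mul_of_symm (hcont.intervalIntegrable (μ := volume)) hsymm,
    integral_cos_two_mul_pow_zero_pi]
  split_ifs <;> ring
end

section
/- For all natural numbers n' and m with m even, ∫_0^π (π − x) · sin(x)^{2n'+1} · cos(x)^m dx = π · Σ_{i=0}^{n'} (−1)^i · binom(n', i) / (2i + m + 1). -/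
/-!
The reflection `x ↦ π - x` preserves `sin x ^ (2n'+1) * cos x ^ m` when `m` is even, so the weight
`π - x` may be replaced by its mean value `π / 2`. The remaining integral becomes
`∫_{-1}^{1} u^m (1 - u²)^{n'} du` under `u = cos x`, which is computed by expanding `(1 - u²)^{n'}`
binomially.
-/

open Real

theorem intervalIntegral.integral_id_mul_of_symm {f : ℝ → ℝ} {a b : ℝ}
    (hf : IntervalIntegrable f MeasureTheory.volume a b) (hsymm : ∀ x, f (a + b - x) = f x) :
    ∫ x in a..b, x * f x = (a + b) / 2 * ∫ x in a..b, f x := by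
  have hid : IntervalIntegrable (fun x => x * f x) MeasureTheory.volume a b :=
    hf.continuousOn_mul (g := fun x => x) continuousOn_id
  have hreflect : ∫ x in a..b, x * f x = ∫ x in a..b, (a + b - x) * f x := by
    have h := intervalIntegral.integral_comp_sub_left (a := a) (b := b) (fun x => x * f x) (a + b)
    simp only [add_sub_cancel_right, add_sub_cancel_left, hsymm] at h
    exact h.symm
  have hsum : (∫ x in a..b, x * f x) + ∫ x in a..b, (a + b - x) * f x
      = (a + b) * ∫ x in a..b, f x := by
    rw [← intervalIntegral.integral_add hid (hf.continuousOn_mul (by fun_prop)),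
      ← intervalIntegral.integral_const_mul]
    congr 1 with x
    ring
  linarith

theorem pow_mul_one_sub_sq_pow {R : Type*} [CommRing R] (u : R) (m n : ℕ) :
    u ^ m * (1 - u ^ 2) ^ n =
      ∑ i ∈ Finset.range (n + 1), (-1 : R) ^ i * (n.choose i : R) * u ^ (m + 2 * i) := by
  rw [sub_eq_neg_add, add_pow, Finset.mul_sum]
  refine Finset.sum_congr rfl fun i _ => ?_
  rw [neg_pow, ← pow_mul]
  ring

theorem integral_neg_one_one_pow_of_even {k : ℕ} (hk : Even k) :
    ∫ u in (-1 : ℝ)..1, u ^ k = 2 / (k + 1) := by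
  rw [integral_pow, one_pow, (hk.add_one).neg_one_pow]
  ring

theorem integral_neg_one_one_pow_mul_one_sub_sq_pow {m : ℕ} (hm : Even m) (n : ℕ) :
    ∫ u in (-1 : ℝ)..1, u ^ m * (1 - u ^ 2) ^ n =
      2 * ∑ i ∈ Finset.range (n + 1), (-1 : ℝ) ^ i * (n.choose i : ℝ) / (2 * i + m + 1) := by
  simp_rw [pow_mul_one_sub_sq_pow]
  rw [intervalIntegral.integral_finsetSum fun i _ =>
    (Continuous.intervalIntegrable (by fun_prop) _ _), Finset.mul_sum]
  refine Finset.sum_congr rfl fun i _ => ?_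
  rw [intervalIntegral.integral_const_mul,
    integral_neg_one_one_pow_of_even (hm.add (even_two_mul i))]
  push_cast
  ring

theorem integral_sin_odd_pow_mul_cos_even_pow (n m : ℕ) (hm : Even m) :
    ∫ x in (0 : ℝ)..π, sin x ^ (2 * n + 1) * cos x ^ m =
      2 * ∑ i ∈ Finset.range (n + 1), (-1 : ℝ) ^ i * (n.choose i : ℝ) / (2 * i + m + 1) := by
  rw [integral_sin_pow_odd_mul_cos_pow, cos_zero, cos_pi,
    integral_neg_one_one_pow_mul_one_sub_sq_pow hm]

/-- Closed form of `∫_0^π (π − x) sin^{2n'+1}(x) cos^m(x) dx` for even `m`. -/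
theorem integral_pi_sub_mul_sin_odd_pow_mul_cos_even_pow (n' m : ℕ) (hm : Even m) :
    ∫ x in (0:ℝ)..π, (π - x) * Real.sin x ^ (2 * n' + 1) * Real.cos x ^ m =
      π * ∑ i ∈ Finset.range (n' + 1),
        (-1 : ℝ) ^ i * (n'.choose i : ℝ) / (2 * i + m + 1 : ℝ) := by
  set f : ℝ → ℝ := fun x => sin x ^ (2 * n' + 1) * cos x ^ m
  have hf : IntervalIntegrable f MeasureTheory.volume 0 π :=
    (Continuous.intervalIntegrable (by fun_prop) _ _)
  have hsymm : ∀ x, f (0 + π - x) = f x := fun x => by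
    simp only [f, zero_add, sin_pi_sub, cos_pi_sub, hm.neg_pow]
  have hmoment := intervalIntegral.integral_id_mul_of_symm hf hsymm
  calc ∫ x in (0:ℝ)..π, (π - x) * sin x ^ (2 * n' + 1) * cos x ^ m
      = π * (∫ x in (0:ℝ)..π, f x) - ∫ x in (0:ℝ)..π, x * f x := by
        rw [← intervalIntegral.integral_const_mul,
          ← intervalIntegral.integral_sub (hf.const_mul π) (hf.continuousOn_mul (g := fun x => x) continuousOn_id)]
        congr 1 with x
        ring
    _ = π / 2 * ∫ x in (0:ℝ)..π, f x := by rw [hmoment]; ring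
    _ = _ := by rw [integral_sin_odd_pow_mul_cos_even_pow n' m hm]; ring
end

section
/- For all natural numbers n and m' with n even, ∫_0^π (π − x) · sin(x)^n · cos(x)^{2m'+1} dx = 2 · Σ_{i=0}^{m'} (−1)^i · binom(m', i) · (2i + n)!! / ( (2i + n + 1) · (2i + n + 1)!! ). -/
/-!
Writing `cos^(2m'+1) x = (1 - sin² x)^m' cos x` and expanding binomially reduces the integral to
the integrals `∫₀^π (π - x) sin^(2k) x cos x dx`. Integrating by parts against the antiderivative
`sin^(2k+1) x / (2k+1)` (the boundary terms vanish since `π - x` and `sin x` vanish at the two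
ends) turns each of them into a Wallis integral `∫₀^π sin^(2k+1) x dx = 2 (2k)‼ / (2k+1)‼`.
-/

open Real Finset
open scoped Nat

theorem prod_range_div_eq_doubleFactorial (k : ℕ) :
    ∏ i ∈ range k, (2 * (i : ℝ) + 2) / (2 * i + 3) = ((2 * k)‼ : ℝ) / ((2 * k + 1)‼ : ℝ) := by
  induction k with
  | zero => simp
  | succ k ih =>
    have hodd : ((2 * k + 1)‼ : ℝ) ≠ 0 := by exact_mod_cast (Nat.doubleFactorial_pos _).ne'
    rw [prod_range_succ, ih, show 2 * (k + 1) = 2 * k + 2 by ring,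
      show 2 * k + 2 + 1 = 2 * k + 1 + 2 by ring,
      Nat.doubleFactorial_add_two, Nat.doubleFactorial_add_two]
    push_cast
    field_simp
    ring

theorem integral_sin_pow_odd_eq_doubleFactorial (k : ℕ) :
    ∫ x in (0 : ℝ)..π, sin x ^ (2 * k + 1) = 2 * ((2 * k)‼ : ℝ) / ((2 * k + 1)‼ : ℝ) := by
  rw [integral_sin_pow_odd, prod_range_div_eq_doubleFactorial, mul_div_assoc]

theorem integral_pi_sub_mul_sin_pow_mul_cos (n : ℕ) :
    ∫ x in (0 : ℝ)..π, (π - x) * sin x ^ n * cos x =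
      (∫ x in (0 : ℝ)..π, sin x ^ (n + 1)) / (n + 1) := by
  have hu : ∀ x ∈ Set.uIcc 0 π, HasDerivAt (fun x : ℝ => π - x) (-1) x := fun x _ => by
    simpa using (hasDerivAt_id x).const_sub π
  have hv : ∀ x ∈ Set.uIcc 0 π,
      HasDerivAt (fun x => sin x ^ (n + 1)) ((n + 1) * sin x ^ n * cos x) x := fun x _ => by
    simpa using (hasDerivAt_sin x).fun_pow (n + 1)
  have hparts : ∫ x in (0 : ℝ)..π, (π - x) * ((n + 1) * sin x ^ n * cos x) =
      ∫ x in (0 : ℝ)..π, sin x ^ (n + 1) := by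
    simpa using intervalIntegral.integral_mul_deriv_eq_deriv_mul hu hv
      intervalIntegrable_const (Continuous.intervalIntegrable (by fun_prop) _ _)
  rw [eq_div_iff (by positivity), ← hparts, ← intervalIntegral.integral_mul_const]
  congr 1 with x
  ring

theorem cos_pow_two_mul_add_one_eq_sum (x : ℝ) (m : ℕ) :
    cos x ^ (2 * m + 1) =
      ∑ i ∈ range (m + 1), (-1 : ℝ) ^ i * m.choose i * (sin x ^ (2 * i) * cos x) := by
  rw [pow_succ, pow_mul, cos_sq', sub_eq_neg_add, add_pow, sum_mul]
  refine sum_congr rfl fun i _ => ?_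
  rw [neg_pow, pow_mul]
  ring

/-- Closed form of `∫_0^π (π − x) sin^n(x) cos^{2m'+1}(x) dx` for even `n`. -/
theorem integral_pi_sub_mul_sin_even_pow_mul_cos_odd_pow (n m' : ℕ) (hn : Even n) :
    ∫ x in (0:ℝ)..π, (π - x) * Real.sin x ^ n * Real.cos x ^ (2 * m' + 1) =
      2 * ∑ i ∈ Finset.range (m' + 1),
        (-1 : ℝ) ^ i * (m'.choose i : ℝ) * (Nat.doubleFactorial (2 * i + n) : ℝ) /
          ((2 * i + n + 1 : ℝ) * (Nat.doubleFactorial (2 * i + n + 1) : ℝ)) := by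
  obtain ⟨p, rfl⟩ := hn
  have hexpand : ∀ x : ℝ, (π - x) * sin x ^ (p + p) * cos x ^ (2 * m' + 1) =
      ∑ i ∈ range (m' + 1), (-1 : ℝ) ^ i * m'.choose i *
        ((π - x) * sin x ^ (2 * (i + p)) * cos x) := fun x => by
    rw [cos_pow_two_mul_add_one_eq_sum, mul_sum]
    refine sum_congr rfl fun i _ => ?_
    rw [show 2 * (i + p) = 2 * i + (p + p) by ring, pow_add]
    ring
  simp_rw [hexpand]
  rw [intervalIntegral.integral_finsetSum
    fun i _ => Continuous.intervalIntegrable (by fun_prop) _ _, mul_sum]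
  refine sum_congr rfl fun i _ => ?_
  rw [intervalIntegral.integral_const_mul, integral_pi_sub_mul_sin_pow_mul_cos,
    integral_sin_pow_odd_eq_doubleFactorial, show 2 * i + (p + p) = 2 * (i + p) by ring]
  push_cast
  field_simp
  ring
end

section
/- For all natural numbers n' and m', ∫_0^π (π − x) · sin(x)^{2n'} · cos(x)^{2m'} dx = (π²/2) · 2^{−(n'+m')} · Σ_{i=0}^{n'} Σ_{j=0}^{m'} [i + j even] · (−1)^i · binom(n', i) · binom(m', j) · (i + j − 1)!! / (i + j)!!, where [i + j even] is 1 if i + j is even and 0 otherwise. -/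
/-! The reflection `x ↦ π - x` fixes `sin x ^ (2 * n') * cos x ^ (2 * m')`, so the weight
`π - x` may be replaced by its mean `π / 2`. The half-angle formulas turn the remaining
integrand into `2 ^ (-(n' + m')) * (1 - cos (2 * x)) ^ n' * (1 + cos (2 * x)) ^ m'`, a polynomial
in `cos (2 * x)`. Finally
`∫ x in 0..π, cos (2 * x) ^ p = (1 + (-1) ^ p) / 2 * ∫ x in 0..π, sin x ^ p`,
which is Wallis' integral `π * (p - 1)‼ / p‼` for even `p` and vanishes for odd `p`. -/

open Real Finset intervalIntegral
open scoped Nat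

namespace Nat

theorem doubleFactorial_two_mul_sub_one (k : ℕ) :
    (2 * k - 1)‼ = ∏ i ∈ range k, (2 * i + 1) := by
  cases k with
  | zero => rfl
  | succ k =>
    rw [show 2 * (k + 1) - 1 = 2 * k + 1 by lia, doubleFactorial_eq_prod_odd, prod_range_succ']
    simp

theorem doubleFactorial_two_mul_sub_one_div (k : ℕ) :
    ((2 * k - 1)‼ : ℝ) / (2 * k)‼ = ∏ i ∈ range k, (2 * (i : ℝ) + 1) / (2 * i + 2) := by
  rw [doubleFactorial_two_mul_sub_one, doubleFactorial_eq_prod_even]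
  push_cast
  rw [← prod_div_distrib]
  ring_nf

end Nat

theorem integral_sin_pow_two_mul (k : ℕ) :
    ∫ x in (0 : ℝ)..π, sin x ^ (2 * k) = π * (2 * k - 1)‼ / (2 * k)‼ := by
  rw [integral_sin_pow_even, mul_div_assoc, Nat.doubleFactorial_two_mul_sub_one_div]

theorem integral_cos_pow_zero_two_pi_eq_sin (p : ℕ) :
    ∫ x in (0 : ℝ)..2 * π, cos x ^ p = ∫ x in (0 : ℝ)..2 * π, sin x ^ p := by
  have hper : Function.Periodic (fun x => sin x ^ p) (2 * π) := fun x => by simp [sin_periodic x]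
  simp_rw [← sin_add_pi_div_two]
  rw [integral_comp_add_right (fun x => sin x ^ p), zero_add, add_comm (2 * π),
    hper.intervalIntegral_add_eq (π / 2) 0, zero_add]

theorem integral_sin_pow_zero_two_pi (p : ℕ) :
    ∫ x in (0 : ℝ)..2 * π, sin x ^ p = (1 + (-1) ^ p) * ∫ x in (0 : ℝ)..π, sin x ^ p := by
  have hint (a b : ℝ) : IntervalIntegrable (fun x => sin x ^ p) MeasureTheory.volume a b :=
    (continuous_sin.pow p).intervalIntegrable a b
  have hshift : ∫ x in π..2 * π, sin x ^ p = (-1) ^ p * ∫ x in (0 : ℝ)..π, sin x ^ p := by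
    rw [← integral_const_mul, two_mul]
    simp_rw [← mul_pow, neg_one_mul, ← sin_add_pi]
    simpa using (integral_comp_add_right (fun x => sin x ^ p) π (a := 0) (b := π)).symm
  rw [← integral_add_adjacent_intervals (hint 0 π) (hint π (2 * π)), hshift]
  ring

theorem integral_cos_two_mul_pow (p : ℕ) :
    ∫ x in (0 : ℝ)..π, cos (2 * x) ^ p =
      (if Even p then 1 else 0) * π * (p - 1)‼ / p‼ := by
  rw [integral_comp_mul_left (fun x => cos x ^ p) two_ne_zero, mul_zero,
    integral_cos_pow_zero_two_pi_eq_sin, integral_sin_pow_zero_two_pi]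
  rcases Nat.even_or_odd' p with ⟨k, rfl | rfl⟩
  · rw [integral_sin_pow_two_mul, if_pos (even_two_mul k), pow_mul, neg_one_sq, one_pow]
    ring
  · rw [if_neg (by simp), Odd.neg_one_pow (odd_two_mul_add_one k)]
    simp

theorem integral_sub_mul_eq_half_mul_integral_of_symm {a b : ℝ} {f : ℝ → ℝ}
    (hf : Continuous f) (hsymm : ∀ x, f (a + b - x) = f x) :
    ∫ x in a..b, (b - x) * f x = (b - a) / 2 * ∫ x in a..b, f x := by
  have hreflect : ∫ x in a..b, (b - x) * f x = ∫ x in a..b, (x - a) * f x := by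
    have hba (x : ℝ) : a + b - x - a = b - x := by ring
    simpa [hsymm, hba] using
      integral_comp_sub_left (fun x => (x - a) * f x) (a + b) (a := a) (b := b)
  have hsum : (∫ x in a..b, (b - x) * f x) + ∫ x in a..b, (x - a) * f x =
      (b - a) * ∫ x in a..b, f x := by
    rw [← integral_add ((by fun_prop : Continuous _).intervalIntegrable _ _)
      ((by fun_prop : Continuous _).intervalIntegrable _ _), ← integral_const_mul]
    congr 1 with x
    ring
  linarith

theorem one_sub_pow_mul_one_add_pow {R : Type*} [CommRing R] (c : R) (n m : ℕ) :
    (1 - c) ^ n * (1 + c) ^ m = ∑ i ∈ range (n + 1), ∑ j ∈ range (m + 1),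
      (-1) ^ i * n.choose i * m.choose j * c ^ (i + j) := by
  rw [sub_eq_neg_add, add_comm 1 c, add_pow, add_pow, sum_mul_sum]
  refine sum_congr rfl fun i _ => sum_congr rfl fun j _ => ?_
  rw [neg_pow, pow_add]
  simp only [one_pow, mul_one]
  ring

theorem one_sub_div_two_pow_mul_one_add_div_two_pow {K : Type*} [Field K] (c : K) (n m : ℕ) :
    ((1 - c) / 2) ^ n * ((1 + c) / 2) ^ m = ∑ i ∈ range (n + 1), ∑ j ∈ range (m + 1),
      ((2 : K) ^ (n + m))⁻¹ * ((-1) ^ i * n.choose i * m.choose j * c ^ (i + j)) := by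
  rw [div_pow, div_pow, div_mul_div_comm, ← pow_add, one_sub_pow_mul_one_add_pow,
    div_eq_inv_mul]
  simp_rw [mul_sum]

/-- Closed form of `∫_0^π (π − x) sin^{2n'}(x) cos^{2m'}(x) dx` (both exponents even);
only terms with `i + j` even contribute, and `(p−1)!!` uses natural subtraction
(so `(0−1)!! = 0!! = 1`). -/
theorem integral_pi_sub_mul_sin_even_pow_mul_cos_even_pow (n' m' : ℕ) :
    ∫ x in (0:ℝ)..π, (π - x) * Real.sin x ^ (2 * n') * Real.cos x ^ (2 * m') =
      (π ^ 2 / 2) * (2 : ℝ) ^ (-(n' + m' : ℤ)) *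
        ∑ i ∈ Finset.range (n' + 1), ∑ j ∈ Finset.range (m' + 1),
          (if Even (i + j) then (1 : ℝ) else 0) *
            (-1 : ℝ) ^ i * (n'.choose i : ℝ) * (m'.choose j : ℝ) *
              (Nat.doubleFactorial (i + j - 1) : ℝ) /
                (Nat.doubleFactorial (i + j) : ℝ) := by
  have hsymm (x : ℝ) : sin (0 + π - x) ^ (2 * n') * cos (0 + π - x) ^ (2 * m') =
      sin x ^ (2 * n') * cos x ^ (2 * m') := by
    rw [zero_add, sin_pi_sub, cos_pi_sub, (even_two_mul m').neg_pow]
  have hpow : (2 : ℝ) ^ (-(n' + m' : ℤ)) = ((2 : ℝ) ^ (n' + m'))⁻¹ := by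
    rw [zpow_neg]
    norm_cast
  calc ∫ x in (0:ℝ)..π, (π - x) * sin x ^ (2 * n') * cos x ^ (2 * m')
      = π / 2 * ∫ x in (0:ℝ)..π, sin x ^ (2 * n') * cos x ^ (2 * m') := by
        simpa [mul_assoc] using integral_sub_mul_eq_half_mul_integral_of_symm
          (f := fun x => sin x ^ (2 * n') * cos x ^ (2 * m')) (by fun_prop) hsymm
    _ = π / 2 * ∑ i ∈ range (n' + 1), ∑ j ∈ range (m' + 1), ((2 : ℝ) ^ (n' + m'))⁻¹ *
          ((-1) ^ i * n'.choose i * m'.choose j * ∫ x in (0:ℝ)..π, cos (2 * x) ^ (i + j)) := by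
        simp_rw [integral_sin_pow_even_mul_cos_pow_even,
          one_sub_div_two_pow_mul_one_add_div_two_pow]
        simp (disch := exact fun _ _ => Continuous.intervalIntegrable (by fun_prop) _ _) only
          [integral_finsetSum, integral_const_mul]
    _ = _ := by
        simp_rw [integral_cos_two_mul_pow, hpow, mul_sum]
        refine sum_congr rfl fun i _ => sum_congr rfl fun j _ => ?_
        ring
end

section
/- Let α > 0 be a real number and let n ≥ 2 be an even natural number. Then ∫_0^1 t · f^{(n)}(t) dt = (−1)^{n/2 − 1} · Γ(n + α + 1/2) · Γ(n − 1) / ( Γ(n/2) · Γ(n/2 + α + 3/2) ), where f^{(n)} denotes the n-th derivative of the function f(t) = (1 − t²)^{n + α − 1/2}. -/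
/-!
Write `f = (1 - t²)^s` with `s = n + α - 1/2` and `D_k` for its `k`-th derivative. On `(-1, 1)`,
`D_k = p_k(t) (1 - t²)^(s - k)` for a polynomial `p_k`, so `D_k → 0` at `1` for `k < s` and
`D_k` is integrable on `[0, 1]` for `k < s + 1`. Since `t D_n` is the derivative of
`t D_{n-1} - D_{n-2}`, the integral is `D_{n-2}(0)`. Differentiating `(1 - t²) f' + 2 s t f = 0`
repeatedly gives `D_{k+2}(0) = (k + 1)(k - 2s) D_k(0)`, whence
`D_{2m}(0) = (-1)^m (2m)!/m! · s(s-1)⋯(s-m+1)`, and this falling factorial is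
`Γ(s + 1) / Γ(s + 1 - m)`.
-/

open Real Set Filter Polynomial MeasureTheory
open scoped Topology

noncomputable def oneSubSqRpow (s t : ℝ) : ℝ := (1 - t ^ 2) ^ s

lemma one_sub_sq_pos {t : ℝ} (ht : t ∈ Ioo (-1 : ℝ) 1) : 0 < 1 - t ^ 2 := by
  nlinarith [ht.1, ht.2]

lemma one_sub_sq_rpow_eq_rpow_sub_one_mul (r : ℝ) {t : ℝ} (ht : t ∈ Ioo (-1 : ℝ) 1) :
    (1 - t ^ 2) ^ r = (1 - t ^ 2) ^ (r - 1) * (1 - t ^ 2) := by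
  rw [← rpow_add_one (one_sub_sq_pos ht).ne', sub_add_cancel]

lemma hasDerivAt_one_sub_sq (t : ℝ) : HasDerivAt (fun x : ℝ => 1 - x ^ 2) (-(2 * t)) t := by
  simpa using (hasDerivAt_pow 2 t).const_sub 1

lemma hasDerivAt_eval_mul_one_sub_sq_rpow (p : Polynomial ℝ) (r : ℝ) {t : ℝ}
    (ht : t ∈ Ioo (-1 : ℝ) 1) :
    HasDerivAt (fun x => p.eval x * (1 - x ^ 2) ^ r)
      ((p.derivative.eval t * (1 - t ^ 2) - 2 * r * t * p.eval t) * (1 - t ^ 2) ^ (r - 1)) t := by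
  refine ((p.hasDerivAt t).mul
    ((hasDerivAt_one_sub_sq t).rpow_const (Or.inl (one_sub_sq_pos ht).ne'))).congr_deriv ?_
  rw [one_sub_sq_rpow_eq_rpow_sub_one_mul r ht]
  ring

lemma exists_polynomial_eqOn_iteratedDeriv_oneSubSqRpow (s : ℝ) (k : ℕ) :
    ∃ p : Polynomial ℝ, EqOn (iteratedDeriv k (oneSubSqRpow s))
      (fun t => p.eval t * (1 - t ^ 2) ^ (s - k)) (Ioo (-1) 1) := by
  induction k with
  | zero => exact ⟨1, fun t _ => by simp [oneSubSqRpow]⟩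
  | succ k ih =>
    obtain ⟨p, hp⟩ := ih
    refine ⟨(1 - X ^ 2) * derivative p - C (2 * (s - k)) * (X * p), fun t ht => ?_⟩
    have hloc : iteratedDeriv k (oneSubSqRpow s) =ᶠ[𝓝 t] _ :=
      eventuallyEq_of_mem (isOpen_Ioo.mem_nhds ht) hp
    have hexp : s - ((k + 1 : ℕ) : ℝ) = s - k - 1 := by push_cast; ring
    rw [iteratedDeriv_succ, hloc.deriv_eq, (hasDerivAt_eval_mul_one_sub_sq_rpow p _ ht).deriv, hexp]
    simp only [eval_sub, eval_mul, eval_one, eval_pow, eval_X, eval_C]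
    ring

lemma hasDerivAt_iteratedDeriv_oneSubSqRpow (s : ℝ) (k : ℕ) {t : ℝ}
    (ht : t ∈ Ioo (-1 : ℝ) 1) :
    HasDerivAt (iteratedDeriv k (oneSubSqRpow s)) (iteratedDeriv (k + 1) (oneSubSqRpow s) t) t := by
  obtain ⟨p, hp⟩ := exists_polynomial_eqOn_iteratedDeriv_oneSubSqRpow s k
  have hloc : iteratedDeriv k (oneSubSqRpow s) =ᶠ[𝓝 t] _ :=
    eventuallyEq_of_mem (isOpen_Ioo.mem_nhds ht) hp
  rw [iteratedDeriv_succ]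
  exact ((hasDerivAt_eval_mul_one_sub_sq_rpow p _ ht).differentiableAt.congr_of_eventuallyEq
    hloc).hasDerivAt

lemma HasDerivAt.eq_zero_of_eqOn_zero {f : ℝ → ℝ} {f' t : ℝ} {U : Set ℝ} (hU : IsOpen U)
    (hf : EqOn f 0 U) (ht : t ∈ U) (h : HasDerivAt f f' t) : f' = 0 :=
  h.unique ((hasDerivAt_const t 0).congr_of_eventuallyEq (eventuallyEq_of_mem (hU.mem_nhds ht) hf))

lemma iteratedDeriv_oneSubSqRpow_ode (s : ℝ) (k : ℕ) {t : ℝ} (ht : t ∈ Ioo (-1 : ℝ) 1) :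
    (1 - t ^ 2) * iteratedDeriv (k + 2) (oneSubSqRpow s) t
      + 2 * (s - k - 1) * t * iteratedDeriv (k + 1) (oneSubSqRpow s) t
      + (k + 1) * (2 * s - k) * iteratedDeriv k (oneSubSqRpow s) t = 0 := by
  set D := fun j => iteratedDeriv j (oneSubSqRpow s)
  have hD : ∀ j, ∀ x ∈ Ioo (-1 : ℝ) 1, HasDerivAt (D j) (D (j + 1) x) x :=
    fun j x hx => hasDerivAt_iteratedDeriv_oneSubSqRpow s j hx
  have first_order : ∀ x ∈ Ioo (-1 : ℝ) 1, (1 - x ^ 2) * D 1 x + 2 * s * x * D 0 x = 0 := by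
    intro x hx
    have h := (hasDerivAt_one_sub_sq x).rpow_const (p := s) (Or.inl (one_sub_sq_pos hx).ne')
    simp only [D, iteratedDeriv_one, iteratedDeriv_zero]
    show (1 - x ^ 2) * deriv (fun y => (1 - y ^ 2) ^ s) x + 2 * s * x * (1 - x ^ 2) ^ s = 0
    rw [h.deriv, one_sub_sq_rpow_eq_rpow_sub_one_mul s hx]
    ring
  induction k generalizing t with
  | zero =>
    have h := ((hasDerivAt_one_sub_sq t).mul (hD 1 t ht)).add
      (((hasDerivAt_id' t).const_mul (2 * s)).mul (hD 0 t ht))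
    have h0 := h.eq_zero_of_eqOn_zero isOpen_Ioo first_order ht
    push_cast
    linear_combination h0
  | succ k ih =>
    have h := ((((hasDerivAt_one_sub_sq t).mul (hD (k + 2) t ht)).add
      (((hasDerivAt_id' t).const_mul (2 * (s - k - 1))).mul (hD (k + 1) t ht))).add
      ((hD k t ht).const_mul ((k + 1) * (2 * s - k))))
    have h0 := h.eq_zero_of_eqOn_zero isOpen_Ioo (fun x hx => ih hx) ht
    push_cast
    linear_combination h0

lemma iteratedDeriv_add_two_oneSubSqRpow_zero (s : ℝ) (k : ℕ) :
    iteratedDeriv (k + 2) (oneSubSqRpow s) 0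
      = (k + 1) * (k - 2 * s) * iteratedDeriv k (oneSubSqRpow s) 0 := by
  have h := iteratedDeriv_oneSubSqRpow_ode s k (t := 0) (by norm_num)
  linear_combination h

lemma iteratedDeriv_two_mul_oneSubSqRpow_zero (s : ℝ) (m : ℕ) :
    iteratedDeriv (2 * m) (oneSubSqRpow s) 0
      = (-1) ^ m * ((2 * m).factorial / m.factorial) * (descPochhammer ℝ m).eval s := by
  induction m with
  | zero => simp [oneSubSqRpow]
  | succ m ih =>
    rw [show 2 * (m + 1) = 2 * m + 2 by ring, iteratedDeriv_add_two_oneSubSqRpow_zero, ih,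
      descPochhammer_succ_eval, Nat.factorial_succ (2 * m + 1), Nat.factorial_succ (2 * m),
      Nat.factorial_succ m]
    push_cast
    field_simp
    ring

lemma Real.Gamma_add_one_eq_descPochhammer_eval_mul {s : ℝ} {m : ℕ} (hm : (m : ℝ) < s + 1) :
    Gamma (s + 1) = (descPochhammer ℝ m).eval s * Gamma (s + 1 - m) := by
  induction m with
  | zero => simp
  | succ m ih =>
    push_cast at hm
    rw [ih (by linarith), descPochhammer_succ_eval, show s + 1 - m = (s - m) + 1 by ring,
      Gamma_add_one (by linarith), Nat.cast_succ, show s + 1 - (m + 1) = s - m by ring]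
    ring

lemma intervalIntegrable_iteratedDeriv_oneSubSqRpow {s : ℝ} {k : ℕ} (hk : (k : ℝ) < s + 1) :
    IntervalIntegrable (iteratedDeriv k (oneSubSqRpow s)) volume 0 1 := by
  obtain ⟨p, hp⟩ := exists_polynomial_eqOn_iteratedDeriv_oneSubSqRpow s k
  have hsing : IntervalIntegrable (fun t : ℝ => (1 - t) ^ (s - k)) volume 0 1 := by
    simpa using ((intervalIntegral.intervalIntegrable_rpow' (a := 0) (b := 1)
      (by linarith)).comp_sub_left 1).symm
  have hcont : ContinuousOn (fun t : ℝ => p.eval t * (1 + t) ^ (s - k)) (uIcc 0 1) := by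
    refine p.continuous.continuousOn.mul (ContinuousOn.rpow_const (by fun_prop) fun t ht => ?_)
    rw [uIcc_of_le zero_le_one] at ht
    exact Or.inl (by linarith [ht.1])
  refine (hsing.continuousOn_mul hcont).congr_uIoo fun t ht => ?_
  rw [uIoo_of_le zero_le_one] at ht
  rw [hp ⟨by linarith [ht.1], ht.2⟩]
  beta_reduce
  rw [show 1 - t ^ 2 = (1 + t) * (1 - t) by ring,
    mul_rpow (by linarith [ht.1]) (by linarith [ht.2])]
  ring

lemma tendsto_iteratedDeriv_oneSubSqRpow_one {s : ℝ} {k : ℕ} (hk : (k : ℝ) < s) :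
    Tendsto (iteratedDeriv k (oneSubSqRpow s)) (𝓝[<] 1) (𝓝 0) := by
  obtain ⟨p, hp⟩ := exists_polynomial_eqOn_iteratedDeriv_oneSubSqRpow s k
  have hcont : ContinuousAt (fun t : ℝ => p.eval t * (1 - t ^ 2) ^ (s - k)) 1 :=
    p.continuous.continuousAt.mul
      ((by fun_prop : ContinuousAt (fun t : ℝ => 1 - t ^ 2) 1).rpow_const (Or.inr (by linarith)))
  have hval : p.eval 1 * (1 - 1 ^ 2 : ℝ) ^ (s - k) = 0 := by
    rw [one_pow, sub_self, zero_rpow (by linarith), mul_zero]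
  rw [← hval]
  refine (hcont.tendsto.mono_left nhdsWithin_le_nhds).congr' ?_
  filter_upwards [Ioo_mem_nhdsLT (show (-1 : ℝ) < 1 by norm_num)] with t ht
  exact (hp ht).symm

lemma integral_mul_iteratedDeriv_add_two_oneSubSqRpow {s : ℝ} {k : ℕ} (hk : (k : ℝ) + 1 < s) :
    ∫ t in (0 : ℝ)..1, t * iteratedDeriv (k + 2) (oneSubSqRpow s) t
      = iteratedDeriv k (oneSubSqRpow s) 0 := by
  set D := fun j => iteratedDeriv j (oneSubSqRpow s)
  have hderiv : ∀ t ∈ Ioo (-1 : ℝ) 1,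
      HasDerivAt (fun x => x * D (k + 1) x - D k x) (t * D (k + 2) t) t := fun t ht =>
    (((hasDerivAt_id' t).mul (hasDerivAt_iteratedDeriv_oneSubSqRpow s (k + 1) ht)).sub
      (hasDerivAt_iteratedDeriv_oneSubSqRpow s k ht)).congr_deriv (by ring)
  have hint : IntervalIntegrable (fun t => t * D (k + 2) t) volume 0 1 :=
    (intervalIntegrable_iteratedDeriv_oneSubSqRpow (by push_cast; linarith)).continuousOn_mul
      continuousOn_id
  have hzero :
      Tendsto (fun x => x * D (k + 1) x - D k x) (𝓝[>] 0) (𝓝 (0 * D (k + 1) 0 - D k 0)) :=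
    (hderiv 0 (by norm_num)).continuousAt.tendsto.mono_left nhdsWithin_le_nhds
  -- `oneSubSqRpow s` need not be differentiable at `1`: the boundary value is a one-sided limit.
  have hone : Tendsto (fun x => x * D (k + 1) x - D k x) (𝓝[<] 1) (𝓝 (1 * 0 - 0)) :=
    ((tendsto_nhdsWithin_of_tendsto_nhds tendsto_id).mul
      (tendsto_iteratedDeriv_oneSubSqRpow_one (by push_cast; linarith))).sub
      (tendsto_iteratedDeriv_oneSubSqRpow_one (by linarith))
  rw [intervalIntegral.integral_eq_sub_of_hasDerivAt_of_tendsto zero_lt_one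
    (fun t ht => hderiv t ⟨by linarith [ht.1], ht.2⟩) hint hzero hone]
  ring

/-- For real `α > 0` and even `n ≥ 2`, with `f(t) = (1 − t²)^{n + α − 1/2}`,
`∫_0^1 t · f⁽ⁿ⁾(t) dt = (−1)^{n/2−1} Γ(n+α+1/2) Γ(n−1) / (Γ(n/2) Γ(n/2+α+3/2))`. -/
theorem integral_mul_iteratedDeriv_even (α : ℝ) (hα : 0 < α) (n : ℕ) (hn : 2 ≤ n)
    (hne : Even n) :
    ∫ t in (0:ℝ)..1,
        t * iteratedDeriv n (fun t : ℝ => (1 - t ^ 2) ^ ((n : ℝ) + α - 1 / 2)) t =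
      (-1 : ℝ) ^ (n / 2 - 1) * Real.Gamma ((n : ℝ) + α + 1 / 2) * Real.Gamma ((n : ℝ) - 1) /
        (Real.Gamma ((n : ℝ) / 2) * Real.Gamma ((n : ℝ) / 2 + α + 3 / 2)) := by
  obtain ⟨m, rfl⟩ : ∃ m, n = 2 * m + 2 := by
    obtain ⟨r, hr⟩ := hne
    exact ⟨r - 1, by omega⟩
  set s : ℝ := ((2 * m + 2 : ℕ) : ℝ) + α - 1 / 2
  have hs : (m : ℝ) < s + 1 := by push_cast [s]; linarith
  have hΓ : Gamma (s + 1 - m) ≠ 0 := (Gamma_pos_of_pos (by linarith)).ne'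
  have hcast : ((2 * m + 2 : ℕ) : ℝ) = 2 * m + 2 := by push_cast; ring
  rw [show (fun t : ℝ => (1 - t ^ 2) ^ s) = oneSubSqRpow s from rfl,
    integral_mul_iteratedDeriv_add_two_oneSubSqRpow (by push_cast [s]; linarith),
    iteratedDeriv_two_mul_oneSubSqRpow_zero, show (2 * m + 2) / 2 - 1 = m by omega,
    show ((2 * m + 2 : ℕ) : ℝ) + α + 1 / 2 = s + 1 by ring,
    show ((2 * m + 2 : ℕ) : ℝ) / 2 + α + 3 / 2 = s + 1 - m by simp only [s, hcast]; ring,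
    show ((2 * m + 2 : ℕ) : ℝ) - 1 = ((2 * m : ℕ) : ℝ) + 1 by rw [hcast]; push_cast; ring,
    show ((2 * m + 2 : ℕ) : ℝ) / 2 = (m : ℝ) + 1 by rw [hcast]; ring,
    Gamma_nat_eq_factorial, Gamma_nat_eq_factorial, Gamma_add_one_eq_descPochhammer_eval_mul hs]
  field_simp
end

section
/- Let α > 0 be a real number and let n ≥ 3 be an odd natural number. Then ∫_0^1 t · f^{(n)}(t) dt = 0, where f^{(n)} denotes the n-th derivative of the function f(t) = (1 − t²)^{n + α − 1/2}. -/
/-!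
Integrating by parts twice, `∫₀¹ t f⁽ⁿ⁾ = [t f⁽ⁿ⁻¹⁾ - f⁽ⁿ⁻²⁾]₀¹`. For `k ≤ β` the derivative
`f⁽ᵏ⁾` of `f t = (1 - t²) ^ β` is a polynomial times `(1 - t²) ^ (β - k)`. With
`β = n + α - 1/2` both boundary terms at `1` therefore vanish, and `f⁽ⁿ⁾`, of order
`(1 - t²) ^ (α - 1/2)` near `1`, is still integrable. At `0`, `f⁽ⁿ⁻²⁾` is an odd-order derivative
of the even function `f`, hence vanishes.
-/

open Real Polynomial Set MeasureTheory

theorem Function.Even.iteratedDeriv_eq_zero_of_odd {F : Type*} [NormedAddCommGroup F]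
    [NormedSpace ℝ F] {f : ℝ → F} (hf : f.Even) {k : ℕ} (hk : Odd k) :
    iteratedDeriv k f 0 = 0 := by
  have h := iteratedDeriv_comp_neg k f 0
  rwa [funext hf, neg_zero, hk.neg_one_pow, neg_one_smul, eq_neg_iff_add_eq_zero,
    ← two_smul ℝ, smul_eq_zero, or_iff_right two_ne_zero] at h

theorem DifferentiableAt.hasDerivAt_iteratedDeriv {𝕜 F : Type*} [NontriviallyNormedField 𝕜]
    [NormedAddCommGroup F] [NormedSpace 𝕜 F] {f : 𝕜 → F} {k : ℕ} {x : 𝕜}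
    (h : DifferentiableAt 𝕜 (iteratedDeriv k f) x) :
    HasDerivAt (iteratedDeriv k f) (iteratedDeriv (k + 1) f x) x := by
  rw [iteratedDeriv_succ]
  exact h.hasDerivAt

theorem hasDerivAt_eval_mul_one_sub_sq_rpow_s10 (p : ℝ[X]) {c t : ℝ} (h : 1 - t ^ 2 ≠ 0 ∨ 1 ≤ c) :
    HasDerivAt (fun t => p.eval t * (1 - t ^ 2) ^ c)
      ((derivative p * (1 - X ^ 2) - C (2 * c) * X * p).eval t * (1 - t ^ 2) ^ (c - 1)) t := by
  have hbase : HasDerivAt (fun t : ℝ => 1 - t ^ 2) (-(2 * t)) t := by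
    simpa using (hasDerivAt_pow 2 t).const_sub 1
  refine ((p.hasDerivAt t).mul ((hasDerivAt_rpow_const h).comp t hbase)).congr_deriv ?_
  have hsplit : (1 - t ^ 2) ^ c = (1 - t ^ 2) ^ (c - 1) * (1 - t ^ 2) := by
    by_cases h0 : 1 - t ^ 2 = 0
    · have hc := h.resolve_left (not_not.2 h0)
      rw [h0, mul_zero, zero_rpow (by linarith)]
    · rw [← rpow_add_one h0, sub_add_cancel]
  simp only [eval_sub, eval_mul, eval_one, eval_pow, eval_X, eval_C, Function.comp_apply, hsplit]
  ring

theorem exists_iteratedDeriv_one_sub_sq_rpow_eq {β : ℝ} {k : ℕ} (hk : (k : ℝ) ≤ β) :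
    ∃ p : ℝ[X], iteratedDeriv k (fun t : ℝ => (1 - t ^ 2) ^ β) =
      fun t => p.eval t * (1 - t ^ 2) ^ (β - k) := by
  induction k with
  | zero => exact ⟨1, by simp⟩
  | succ k ih =>
    push_cast at hk
    obtain ⟨p, hp⟩ := ih (by linarith)
    refine ⟨derivative p * (1 - X ^ 2) - C (2 * (β - k)) * X * p, funext fun t => ?_⟩
    rw [iteratedDeriv_succ, hp,
      (hasDerivAt_eval_mul_one_sub_sq_rpow_s10 p (Or.inr (by linarith))).deriv]
    push_cast
    ring_nf

theorem integral_id_mul_eq_sub_of_hasDerivAt {F G H : ℝ → ℝ} {a b : ℝ} (hab : a ≤ b)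
    (hF : ContinuousOn F (Icc a b)) (hG : ContinuousOn G (Icc a b))
    (hFG : ∀ t ∈ Ioo a b, HasDerivAt F (G t) t) (hGH : ∀ t ∈ Ioo a b, HasDerivAt G (H t) t)
    (hH : IntervalIntegrable (fun t => t * H t) volume a b) :
    ∫ t in a..b, t * H t = (b * G b - F b) - (a * G a - F a) := by
  refine intervalIntegral.integral_eq_sub_of_hasDeriv_right_of_le hab
    ((continuousOn_id.mul hG).sub hF) (fun t ht => ?_) hH
  convert (((hasDerivAt_id t).mul (hGH t ht)).sub (hFG t ht)).hasDerivWithinAt using 1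
  simp

theorem intervalIntegrable_mul_one_sub_sq_rpow {g : ℝ → ℝ} (hg : ContinuousOn g (Icc 0 1))
    {c : ℝ} (hc : -1 < c) : IntervalIntegrable (fun t => g t * (1 - t ^ 2) ^ c) volume 0 1 := by
  have hsing : IntervalIntegrable (fun t : ℝ => (1 - t) ^ c) volume 0 1 := by
    simpa using (intervalIntegral.intervalIntegrable_rpow' (a := 1) (b := 0) hc).comp_sub_left 1
  have hreg : ContinuousOn (fun t : ℝ => g t * (1 + t) ^ c) (uIcc 0 1) := by
    rw [uIcc_of_le zero_le_one]
    exact hg.mul <| ContinuousOn.rpow_const (by fun_prop) fun t ht => Or.inl (by linarith [ht.1])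
  refine (hsing.continuousOn_mul hreg).congr_uIoo fun t ht => ?_
  rw [uIoo_of_le zero_le_one] at ht
  have hfactor : (1 : ℝ) - t ^ 2 = (1 - t) * (1 + t) := by ring
  rw [hfactor, mul_rpow (by linarith [ht.2]) (by linarith [ht.1])]
  ring

section

variable {β : ℝ} {k : ℕ}

theorem continuous_iteratedDeriv_one_sub_sq_rpow (hk : (k : ℝ) ≤ β) :
    Continuous (iteratedDeriv k fun t : ℝ => (1 - t ^ 2) ^ β) := by
  obtain ⟨p, hp⟩ := exists_iteratedDeriv_one_sub_sq_rpow_eq hk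
  rw [hp]
  exact p.continuous.mul <| Continuous.rpow_const (by fun_prop) fun _ => Or.inr (by linarith)

theorem iteratedDeriv_one_sub_sq_rpow_one (hk : (k : ℝ) < β) :
    iteratedDeriv k (fun t : ℝ => (1 - t ^ 2) ^ β) 1 = 0 := by
  obtain ⟨p, hp⟩ := exists_iteratedDeriv_one_sub_sq_rpow_eq hk.le
  simp only [hp, one_pow, sub_self, zero_rpow (sub_pos.2 hk).ne', mul_zero]

theorem hasDerivAt_iteratedDeriv_one_sub_sq_rpow {t : ℝ} (hk : (k : ℝ) ≤ β)
    (h : 1 - t ^ 2 ≠ 0 ∨ (k : ℝ) + 1 ≤ β) :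
    HasDerivAt (iteratedDeriv k fun t : ℝ => (1 - t ^ 2) ^ β)
      (iteratedDeriv (k + 1) (fun t : ℝ => (1 - t ^ 2) ^ β) t) t := by
  obtain ⟨p, hp⟩ := exists_iteratedDeriv_one_sub_sq_rpow_eq hk
  have hderiv := hasDerivAt_eval_mul_one_sub_sq_rpow_s10 p (c := β - k) (t := t)
    (h.imp_right fun h => by linarith)
  exact (hp ▸ hderiv).differentiableAt.hasDerivAt_iteratedDeriv

theorem intervalIntegrable_mul_iteratedDeriv_succ_one_sub_sq_rpow {g : ℝ → ℝ}
    (hg : ContinuousOn g (Icc 0 1)) (hk : (k : ℝ) < β) :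
    IntervalIntegrable (fun t => g t * iteratedDeriv (k + 1) (fun t : ℝ => (1 - t ^ 2) ^ β) t)
      volume 0 1 := by
  obtain ⟨p, hp⟩ := exists_iteratedDeriv_one_sub_sq_rpow_eq hk.le
  obtain ⟨r, hr⟩ : ∃ r : ℝ[X], ∀ t ∈ Ioo (0 : ℝ) 1,
      HasDerivAt (iteratedDeriv k fun t : ℝ => (1 - t ^ 2) ^ β)
        (r.eval t * (1 - t ^ 2) ^ (β - k - 1)) t :=
    ⟨_, fun t ht => hp ▸ hasDerivAt_eval_mul_one_sub_sq_rpow_s10 p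
      (Or.inl (by nlinarith [ht.1, ht.2]))⟩
  refine (intervalIntegrable_mul_one_sub_sq_rpow (hg.mul r.continuous.continuousOn)
    (by linarith : -1 < β - k - 1)).congr_uIoo fun t ht => ?_
  rw [uIoo_of_le zero_le_one] at ht
  have hderiv := hasDerivAt_iteratedDeriv_one_sub_sq_rpow (t := t) hk.le
    (Or.inl (by nlinarith [ht.1, ht.2]))
  rw [hderiv.unique (hr t ht)]
  exact mul_assoc _ _ _

end

/-- For real `α > 0` and odd `n ≥ 3`, with `f(t) = (1 − t²)^{n + α − 1/2}`,
`∫_0^1 t · f⁽ⁿ⁾(t) dt = 0`. -/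
theorem integral_mul_iteratedDeriv_odd (α : ℝ) (hα : 0 < α) (n : ℕ) (hn : 3 ≤ n)
    (hno : Odd n) :
    ∫ t in (0:ℝ)..1,
        t * iteratedDeriv n (fun t : ℝ => (1 - t ^ 2) ^ ((n : ℝ) + α - 1 / 2)) t = 0 := by
  obtain ⟨m, rfl⟩ : ∃ m, n = m + 2 := ⟨n - 2, by omega⟩
  set β : ℝ := ((m + 2 : ℕ) : ℝ) + α - 1 / 2 with hβ
  have hm : ((m + 1 : ℕ) : ℝ) < β := by rw [hβ]; push_cast; linarith
  have hm₀ : (m : ℝ) < β := (Nat.cast_lt.2 m.lt_succ_self).trans hm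
  rw [integral_id_mul_eq_sub_of_hasDerivAt zero_le_one
      (continuous_iteratedDeriv_one_sub_sq_rpow hm₀.le).continuousOn
      (continuous_iteratedDeriv_one_sub_sq_rpow hm.le).continuousOn
      (fun t _ => hasDerivAt_iteratedDeriv_one_sub_sq_rpow hm₀.le
        (Or.inr (by exact_mod_cast hm.le)))
      (fun t ht => hasDerivAt_iteratedDeriv_one_sub_sq_rpow hm.le
        (Or.inl (by nlinarith [ht.1, ht.2])))
      (intervalIntegrable_mul_iteratedDeriv_succ_one_sub_sq_rpow continuousOn_id hm),
    iteratedDeriv_one_sub_sq_rpow_one hm₀, iteratedDeriv_one_sub_sq_rpow_one hm,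
    Function.Even.iteratedDeriv_eq_zero_of_odd (fun t => by rw [neg_sq])
      (Nat.odd_add.mp hno |>.mpr even_two)]
  ring
end

section
/- Let d ≥ 3 be a natural number, set α = (d − 2)/2, and let n ≥ 2 be an even natural number. Then ( Γ(d/2) / ( Γ((d−1)/2) · √π ) ) · ( (−1)^n / 2^n ) · ( Γ(α + 1/2) / Γ(α + n + 1/2) ) · ∫_0^1 t · f^{(n)}(t) dt = Γ(d/2) · (−1)^{n/2 − 1} · Γ(n − 1) / ( √π · 2^n · Γ(n/2) · Γ((n + d + 1)/2) ), where f^{(n)} denotes the n-th derivative of the function f(t) = (1 − t²)^{n + α − 1/2}. -/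
/-!
On `(-1, 1)` the `k`-th derivative of `(1 - t²)^β` is `(1 - t²)^(β - k) Q_k(t)` for polynomials
`Q_k` obeying a Rodrigues-type recursion. Since `t g''` is the derivative of `t g' - g`, and the
boundary terms at `1` vanish for `β > n - 1`, the integral `∫₀¹ t f⁽ⁿ⁾(t) dt` equals
`f⁽ⁿ⁻²⁾(0) = Q_{n-2}(0)`. The recursion gives `Q_{k+2}(0) = (k + 1)(k - 2β) Q_k(0)`, so
`Q_{2m}(0) = (-1)^m (2m)!/m! · β(β - 1)⋯(β - m + 1) = (-1)^m (2m)!/m! · Γ(β + 1)/Γ(β + 1 - m)`;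
with `β = n + α - 1/2` all remaining Gamma factors cancel against the closed form.
-/

open Real Polynomial Nat MeasureTheory

theorem Real.Gamma_add_one_eq_descPochhammer_mul (x : ℝ) (m : ℕ) (hx : ∀ j < m, x ≠ j) :
    Gamma (x + 1) = (descPochhammer ℝ m).eval x * Gamma (x + 1 - m) := by
  induction m with
  | zero => simp
  | succ m ih =>
    have hxm : x - m ≠ 0 := sub_ne_zero.mpr (hx m m.lt_succ_self)
    rw [ih fun j hj => hx j (Nat.lt_succ_of_lt hj), descPochhammer_succ_eval,
      show x + 1 - m = (x - m) + 1 by ring, Gamma_add_one hxm]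
    push_cast
    ring_nf

namespace OneSubSqRpow

noncomputable def derivPoly (β : ℝ) : ℕ → ℝ[X]
  | 0 => 1
  | k + 1 => C (2 * ((k : ℝ) - β)) * X * derivPoly β k + (1 - X ^ 2) * derivative (derivPoly β k)

theorem derivative_derivPoly_succ (β : ℝ) (k : ℕ) :
    derivative (derivPoly β (k + 1)) = C (((k : ℝ) + 1) * ((k : ℝ) - 2 * β)) * derivPoly β k := by
  induction k with
  | zero => simp [derivPoly]
  | succ k ih =>
    have hdef : (1 - X ^ 2) * derivative (derivPoly β k)
        = derivPoly β (k + 1) - C (2 * ((k : ℝ) - β)) * X * derivPoly β k := by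
      rw [derivPoly]; ring
    rw [derivPoly]
    simp only [derivative_add, derivative_mul, derivative_sub, derivative_one, derivative_C,
      derivative_X, derivative_X_pow, ih]
    simp only [map_mul, map_add, map_sub, map_one, map_natCast, map_ofNat, Nat.cast_add,
      Nat.cast_one, Nat.cast_ofNat] at hdef ⊢
    linear_combination ((k : ℝ[X]) + 1) * ((k : ℝ[X]) - 2 * C β) * hdef

theorem derivPoly_eval_zero_add_two (β : ℝ) (k : ℕ) :
    (derivPoly β (k + 2)).eval 0 = ((k : ℝ) + 1) * ((k : ℝ) - 2 * β) * (derivPoly β k).eval 0 := by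
  rw [derivPoly, derivative_derivPoly_succ]
  simp

theorem derivPoly_eval_zero_two_mul (β : ℝ) (m : ℕ) :
    (derivPoly β (2 * m)).eval 0 = (-1) ^ m * (2 * m)! / m ! * (descPochhammer ℝ m).eval β := by
  induction m with
  | zero => simp [derivPoly]
  | succ m ih =>
    rw [show 2 * (m + 1) = 2 * m + 2 by ring, derivPoly_eval_zero_add_two, ih,
      descPochhammer_succ_eval, show 2 * m + 2 = (2 * m + 1) + 1 by ring,
      Nat.factorial_succ, Nat.factorial_succ, Nat.factorial_succ]
    push_cast
    field_simp
    ring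

noncomputable def derivClosedForm (β : ℝ) (k : ℕ) (t : ℝ) : ℝ :=
  (1 - t ^ 2) ^ (β - k) * (derivPoly β k).eval t

theorem hasDerivAt_derivClosedForm (β : ℝ) (k : ℕ) {t : ℝ} (ht : t ∈ Set.Ioo (-1 : ℝ) 1) :
    HasDerivAt (derivClosedForm β k) (derivClosedForm β (k + 1) t) t := by
  have hpos : 0 < 1 - t ^ 2 := by nlinarith [ht.1, ht.2]
  have hbase : HasDerivAt (fun t : ℝ => 1 - t ^ 2) (-(2 * t)) t := by
    simpa using (hasDerivAt_pow 2 t).const_sub 1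
  refine ((hbase.rpow_const (p := β - k) (Or.inl hpos.ne')).mul
    ((derivPoly β k).hasDerivAt t)).congr_deriv ?_
  have hsplit : (1 - t ^ 2) ^ (β - k) = (1 - t ^ 2) ^ (β - (k + 1)) * (1 - t ^ 2) := by
    rw [← rpow_add_one hpos.ne']; ring_nf
  simp only [derivClosedForm, derivPoly, eval_add, eval_mul, eval_sub, eval_one, eval_pow,
    eval_X, eval_C, Nat.cast_add, Nat.cast_one, hsplit, show β - k - 1 = β - (k + 1) by ring]
  ring

theorem iteratedDeriv_eq_derivClosedForm (β : ℝ) (k : ℕ) {t : ℝ}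
    (ht : t ∈ Set.Ioo (-1 : ℝ) 1) :
    iteratedDeriv k (fun t : ℝ => (1 - t ^ 2) ^ β) t = derivClosedForm β k t := by
  induction k generalizing t with
  | zero => simp [derivClosedForm, derivPoly]
  | succ k ih =>
    have hev : iteratedDeriv k (fun t : ℝ => (1 - t ^ 2) ^ β) =ᶠ[nhds t] derivClosedForm β k :=
      Filter.eventuallyEq_of_mem (isOpen_Ioo.mem_nhds ht) fun x hx => ih hx
    rw [iteratedDeriv_succ, hev.deriv_eq, (hasDerivAt_derivClosedForm β k ht).deriv]

theorem continuous_derivClosedForm {β : ℝ} {k : ℕ} (hk : (k : ℝ) ≤ β) :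
    Continuous (derivClosedForm β k) :=
  ((continuous_const.sub (continuous_pow 2)).rpow_const fun _ => Or.inr (sub_nonneg.mpr hk)).mul
    (derivPoly β k).continuous

theorem derivClosedForm_one {β : ℝ} {k : ℕ} (hk : (k : ℝ) < β) : derivClosedForm β k 1 = 0 := by
  simp [derivClosedForm, zero_rpow (sub_ne_zero.mpr hk.ne')]

theorem derivClosedForm_zero (β : ℝ) (k : ℕ) :
    derivClosedForm β k 0 = (derivPoly β k).eval 0 := by
  simp [derivClosedForm]

theorem integral_mul_iteratedDeriv_add_two {β : ℝ} {k : ℕ} (hk : (k : ℝ) + 2 ≤ β) :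
    ∫ t in (0 : ℝ)..1, t * iteratedDeriv (k + 2) (fun t : ℝ => (1 - t ^ 2) ^ β) t
      = (derivPoly β k).eval 0 := by
  have hIoo : ∀ x ∈ Set.Ioo (0 : ℝ) 1, x ∈ Set.Ioo (-1 : ℝ) 1 :=
    fun x hx => ⟨by linarith [hx.1], hx.2⟩
  have hderiv : ∀ x ∈ Set.Ioo (0 : ℝ) 1,
      HasDerivAt (fun t => t * derivClosedForm β (k + 1) t - derivClosedForm β k t)
        (x * derivClosedForm β (k + 2) x) x := by
    intro x hx
    refine (((hasDerivAt_id x).mul (hasDerivAt_derivClosedForm β (k + 1) (hIoo x hx))).sub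
      (hasDerivAt_derivClosedForm β k (hIoo x hx))).congr_deriv ?_
    simp
  have hcont : ∀ j : ℕ, j ≤ k + 2 → Continuous (derivClosedForm β j) := by
    intro j hj
    have : (j : ℝ) ≤ k + 2 := by exact_mod_cast hj
    exact continuous_derivClosedForm (by linarith)
  calc ∫ t in (0 : ℝ)..1, t * iteratedDeriv (k + 2) (fun t : ℝ => (1 - t ^ 2) ^ β) t
      = ∫ t in (0 : ℝ)..1, t * derivClosedForm β (k + 2) t := by
        simp only [intervalIntegral.integral_of_le zero_le_one, integral_Ioc_eq_integral_Ioo]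
        exact setIntegral_congr_fun measurableSet_Ioo fun x hx => by
          rw [iteratedDeriv_eq_derivClosedForm β (k + 2) (hIoo x hx)]
    _ = (1 * derivClosedForm β (k + 1) 1 - derivClosedForm β k 1)
          - (0 * derivClosedForm β (k + 1) 0 - derivClosedForm β k 0) :=
        intervalIntegral.integral_eq_sub_of_hasDerivAt_of_le zero_le_one
          ((continuous_id.mul (hcont _ (by omega))).sub (hcont _ (by omega))).continuousOn
          hderiv ((continuous_id.mul (hcont _ le_rfl)).intervalIntegrable 0 1)
    _ = (derivPoly β k).eval 0 := by
        rw [derivClosedForm_one (by push_cast; linarith), derivClosedForm_one (by linarith),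
          derivClosedForm_zero β k]
        ring

end OneSubSqRpow

/-- The Funk–Hecke/Rodrigues expression for the even-degree (`n ≥ 2`) Fourier
coefficient `σ_n` of the ReLU activation on `S^{d−1}` (`d ≥ 3`, `α = (d−2)/2`)
equals the closed form
`Γ(d/2) (−1)^{n/2−1} Γ(n−1) / (√π 2ⁿ Γ(n/2) Γ((n+d+1)/2))`. -/
theorem relu_fourier_coefficient_even (d : ℕ) (hd : 3 ≤ d) (α : ℝ)
    (hα : α = ((d : ℝ) - 2) / 2) (n : ℕ) (hn : 2 ≤ n) (hne : Even n) :
    (Real.Gamma ((d : ℝ) / 2) / (Real.Gamma (((d : ℝ) - 1) / 2) * Real.sqrt π)) *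
        ((-1 : ℝ) ^ n / 2 ^ n) *
        (Real.Gamma (α + 1 / 2) / Real.Gamma (α + (n : ℝ) + 1 / 2)) *
        ∫ t in (0:ℝ)..1,
          t * iteratedDeriv n (fun t : ℝ => (1 - t ^ 2) ^ ((n : ℝ) + α - 1 / 2)) t =
      Real.Gamma ((d : ℝ) / 2) * (-1 : ℝ) ^ (n / 2 - 1) * Real.Gamma ((n : ℝ) - 1) /
        (Real.sqrt π * 2 ^ n * Real.Gamma ((n : ℝ) / 2) *
          Real.Gamma (((n : ℝ) + (d : ℝ) + 1) / 2)) := by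
  obtain ⟨m, rfl⟩ : ∃ m, n = 2 * m + 2 := ⟨n / 2 - 1, by obtain ⟨r, rfl⟩ := hne; omega⟩
  set β : ℝ := ((2 * m + 2 : ℕ) : ℝ) + α - 1 / 2 with hβ
  have hα' : 1 / 2 ≤ α := by
    have : (3 : ℝ) ≤ d := by exact_mod_cast hd
    rw [hα]; linarith
  have hβm : 2 * (m : ℝ) + 2 ≤ β := by rw [hβ]; push_cast; linarith
  have hGamma := Gamma_add_one_eq_descPochhammer_mul β m fun j hj h => by
    have : (j : ℝ) < m := by exact_mod_cast hj
    linarith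
  have hβ1 : 0 < Gamma (β + 1) := Gamma_pos_of_pos (by linarith)
  have hG1 : 0 < Gamma (α + 1 / 2) := Gamma_pos_of_pos (by linarith)
  have hG2 : 0 < Gamma (β + 1 - m) := Gamma_pos_of_pos (by linarith)
  have hD : (descPochhammer ℝ m).eval β ≠ 0 := by
    rintro h; rw [h, zero_mul] at hGamma; exact hβ1.ne' hGamma
  rw [OneSubSqRpow.integral_mul_iteratedDeriv_add_two (by push_cast; linarith),
    OneSubSqRpow.derivPoly_eval_zero_two_mul,
    show α + ((2 * m + 2 : ℕ) : ℝ) + 1 / 2 = β + 1 by rw [hβ]; ring, hGamma,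
    show ((d : ℝ) - 1) / 2 = α + 1 / 2 by rw [hα]; ring,
    show (((2 * m + 2 : ℕ) : ℝ) + d + 1) / 2 = β + 1 - m by rw [hβ, hα]; push_cast; ring,
    show ((2 * m + 2 : ℕ) : ℝ) - 1 = ((2 * m : ℕ) : ℝ) + 1 by push_cast; ring,
    show ((2 * m + 2 : ℕ) : ℝ) / 2 = (m : ℝ) + 1 by push_cast; ring,
    Gamma_nat_eq_factorial, Gamma_nat_eq_factorial,
    show (2 * m + 2) / 2 - 1 = m by omega, Even.neg_one_pow ⟨m + 1, by ring⟩]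
  -- otherwise `field_simp` rewrites `α + 1 / 2` inside `Gamma` and loses `hG1`
  generalize Gamma (α + 1 / 2) = G at hG1 ⊢
  field_simp
end
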